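/- arXiv:2512.22663 — 2 statements merged into one kernel-verified Lean document; each statement's English description precedes it below -/
import Mathlib

section
/- Let (X, f_{1,∞}) be a periodic non-autonomous system on a compact uniform space (X, 𝒰) with period p and induced map g. Then (X, f_{1,∞}) is syndetically equicontinuous if and only if (X, g) is syndetically equicontinuous. -/
open Topology Filter Set
open scoped Uniformity

/-- `traj f n = f_n ∘ ⋯ ∘ f_1` (and `traj f 0 = id`), i.e. `f_1^n`. -/
def traj {X : Type*} (f : ℕ → X → X) : ℕ → X → X
  | 0 => id
  | n + 1 => f (n + 1) ∘ traj f n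

/-- The family `f` is periodic with period `p`. -/
def PeriodicFam {X : Type*} (f : ℕ → X → X) (p : ℕ) : Prop :=
  ∀ n, f (n + p) = f n

/-- A set of naturals is thick: it contains arbitrarily long blocks of consecutive integers. -/
def Thick (T : Set ℕ) : Prop :=
  ∀ k : ℕ, ∃ n : ℕ, ∀ i ≤ k, n + i ∈ T

/-- A set of naturals is syndetic: it has bounded gaps. -/
def Syndetic (S : Set ℕ) : Prop :=
  ∃ M : ℕ, ∀ n : ℕ, ∃ m ∈ S, n ≤ m ∧ m ≤ n + M

/-- `x` is a transitive point of the non-autonomous system `(X, f_{1,∞})`. -/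
def TransPt {X : Type*} [TopologicalSpace X] (f : ℕ → X → X) (x : X) : Prop :=
  Dense (Set.range fun n => traj f n x)

/-- `x` is a transitive point of the autonomous system `(X, g)`. -/
def TransPtAut {X : Type*} [TopologicalSpace X] (g : X → X) (x : X) : Prop :=
  Dense (Set.range fun n => g^[n] x)

/-- `x` is an equicontinuity point of `(X, f_{1,∞})` on a uniform space. -/
def EqPt {X : Type*} [UniformSpace X] (f : ℕ → X → X) (x : X) : Prop :=
  ∀ E ∈ 𝓤 X, ∃ D ∈ 𝓤 X, ∀ y : X, (x, y) ∈ D → ∀ n : ℕ, (traj f n x, traj f n y) ∈ E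

/-- `x` is a syndetically equicontinuous point of `(X, f_{1,∞})`. -/
def SynEqPt {X : Type*} [UniformSpace X] (f : ℕ → X → X) (x : X) : Prop :=
  ∀ E ∈ 𝓤 X, ∃ U ∈ 𝓝 x,
    Syndetic {n : ℕ | ∀ x₁ ∈ U, ∀ x₂ ∈ U, (traj f n x₁, traj f n x₂) ∈ E}

/-- `x` is a syndetically equicontinuous point of the autonomous system `(X, g)`. -/
def SynEqPtAut {X : Type*} [UniformSpace X] (g : X → X) (x : X) : Prop :=
  ∀ E ∈ 𝓤 X, ∃ U ∈ 𝓝 x,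
    Syndetic {n : ℕ | ∀ x₁ ∈ U, ∀ x₂ ∈ U, (g^[n] x₁, g^[n] x₂) ∈ E}

/-- `N(U, D)` for the non-autonomous system. -/
def NSet {X : Type*} (f : ℕ → X → X) (U : Set X) (D : Set (X × X)) : Set ℕ :=
  {n : ℕ | 0 < n ∧ ∃ x ∈ U, ∃ y ∈ U, (traj f n x, traj f n y) ∉ D}

/-- `N(U, D)` for the autonomous system. -/
def NSetAut {X : Type*} (g : X → X) (U : Set X) (D : Set (X × X)) : Set ℕ :=
  {n : ℕ | 0 < n ∧ ∃ x ∈ U, ∃ y ∈ U, (g^[n] x, g^[n] y) ∉ D}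

/-- Sensitivity of `(X, f_{1,∞})`. -/
def Sensitive {X : Type*} [UniformSpace X] (f : ℕ → X → X) : Prop :=
  ∃ D ∈ 𝓤 X, ∀ U : Set X, IsOpen U → U.Nonempty → (NSet f U D).Nonempty

/-- Thick sensitivity of `(X, f_{1,∞})`. -/
def ThickSensitive {X : Type*} [UniformSpace X] (f : ℕ → X → X) : Prop :=
  ∃ D ∈ 𝓤 X, ∀ U : Set X, IsOpen U → U.Nonempty → Thick (NSet f U D)

/-- Thick sensitivity of the autonomous system `(X, g)`. -/
def ThickSensitiveAut {X : Type*} [UniformSpace X] (g : X → X) : Prop :=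
  ∃ D ∈ 𝓤 X, ∀ U : Set X, IsOpen U → U.Nonempty → Thick (NSetAut g U D)

/-- Multi-sensitivity of `(X, f_{1,∞})`. -/
def MultiSensitive {X : Type*} [UniformSpace X] (f : ℕ → X → X) : Prop :=
  ∃ D ∈ 𝓤 X, ∀ (k : ℕ) (U : Fin (k + 1) → Set X),
    (∀ i, IsOpen (U i)) → (∀ i, (U i).Nonempty) → (⋂ i, NSet f (U i) D).Nonempty

/-- Multi-sensitivity of the autonomous system `(X, g)`. -/
def MultiSensitiveAut {X : Type*} [UniformSpace X] (g : X → X) : Prop :=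
  ∃ D ∈ 𝓤 X, ∀ (k : ℕ) (U : Fin (k + 1) → Set X),
    (∀ i, IsOpen (U i)) → (∀ i, (U i).Nonempty) → (⋂ i, NSetAut g (U i) D).Nonempty

/-- Eventual sensitivity of `(X, f_{1,∞})` with a given entourage `D`. -/
def EvSensitiveWith {X : Type*} [UniformSpace X] (f : ℕ → X → X) (D : Set (X × X)) : Prop :=
  ∀ x : X, ∀ E ∈ 𝓤 X, ∃ n k : ℕ, 0 < n ∧ 0 < k ∧
    ∃ y : X, (traj f n x, y) ∈ E ∧ (traj f (n + k) x, traj f k y) ∉ D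

/-- Eventual sensitivity of `(X, f_{1,∞})`. -/
def EvSensitive {X : Type*} [UniformSpace X] (f : ℕ → X → X) : Prop :=
  ∃ D ∈ 𝓤 X, EvSensitiveWith f D

/-- Eventual sensitivity of the autonomous system `(X, g)` with entourage `D`. -/
def EvSensitiveAutWith {X : Type*} [UniformSpace X] (g : X → X) (D : Set (X × X)) : Prop :=
  ∀ x : X, ∀ E ∈ 𝓤 X, ∃ q k : ℕ, 0 < q ∧ 0 < k ∧
    ∃ y : X, (g^[q] x, y) ∈ E ∧ (g^[q + k] x, g^[k] y) ∉ D

/-- `(x, y)` is a (topological) equicontinuity pair for `(X, f_{1,∞})`. -/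
def EqPair {X : Type*} [TopologicalSpace X] (f : ℕ → X → X) (x y : X) : Prop :=
  ∀ O ∈ 𝓝 y, ∃ U ∈ 𝓝 x, ∃ V ∈ 𝓝 y, ∀ n : ℕ, 0 < n →
    ((traj f n '' U) ∩ V).Nonempty → traj f n '' U ⊆ O

/-- `(x, y)` is a syndetic equicontinuity pair for `(X, f_{1,∞})`. -/
def SynEqPair {X : Type*} [TopologicalSpace X] (f : ℕ → X → X) (x y : X) : Prop :=
  ∀ O ∈ 𝓝 y, ∃ U ∈ 𝓝 x, ∃ V ∈ 𝓝 y,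
    Syndetic {n : ℕ | ((traj f n '' U) ∩ V).Nonempty → traj f n '' U ⊆ O}

/-- `O` is a splitting neighborhood of `y` with respect to `x`. -/
def SplittingNbhd {X : Type*} [TopologicalSpace X] (f : ℕ → X → X) (x y : X) (O : Set X) :
    Prop :=
  O ∈ 𝓝 y ∧ ∀ U ∈ 𝓝 x, ∀ V ∈ 𝓝 y, ∃ n : ℕ, 0 < n ∧
    ((traj f n '' U) ∩ V).Nonempty ∧ ¬ traj f n '' U ⊆ O

/-- A finite open cover of `X`. -/
def IsFinOpenCover {X : Type*} [TopologicalSpace X] (𝒰 : Finset (Set X)) : Prop :=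
  (∀ U ∈ 𝒰, IsOpen U) ∧ ⋃₀ (↑𝒰 : Set (Set X)) = Set.univ

/-- `N(V, 𝒰)`: times at which `f_1^n(V)` is not contained in any single member of `𝒰`. -/
def HNSet {X : Type*} (f : ℕ → X → X) (V : Set X) (𝒰 : Finset (Set X)) : Set ℕ :=
  {n : ℕ | 0 < n ∧ ∀ U ∈ 𝒰, ¬ traj f n '' V ⊆ U}

/-- `N(V, 𝒰)` for the autonomous system. -/
def HNSetAut {X : Type*} (g : X → X) (V : Set X) (𝒰 : Finset (Set X)) : Set ℕ :=
  {n : ℕ | 0 < n ∧ ∀ U ∈ 𝒰, ¬ g^[n] '' V ⊆ U}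

/-- Hausdorff sensitivity of `(X, f_{1,∞})`. -/
def HSensitive {X : Type*} [TopologicalSpace X] (f : ℕ → X → X) : Prop :=
  ∃ 𝒰 : Finset (Set X), IsFinOpenCover 𝒰 ∧
    ∀ V : Set X, IsOpen V → V.Nonempty → (HNSet f V 𝒰).Nonempty

/-- Hausdorff sensitivity of the autonomous system `(X, g)`. -/
def HSensitiveAut {X : Type*} [TopologicalSpace X] (g : X → X) : Prop :=
  ∃ 𝒰 : Finset (Set X), IsFinOpenCover 𝒰 ∧
    ∀ V : Set X, IsOpen V → V.Nonempty → (HNSetAut g V 𝒰).Nonempty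

/-- Thick Hausdorff sensitivity of `(X, f_{1,∞})`. -/
def ThickHSensitive {X : Type*} [TopologicalSpace X] (f : ℕ → X → X) : Prop :=
  ∃ 𝒰 : Finset (Set X), IsFinOpenCover 𝒰 ∧
    ∀ V : Set X, IsOpen V → V.Nonempty → Thick (HNSet f V 𝒰)

/-- Thick Hausdorff sensitivity of the autonomous system `(X, g)`. -/
def ThickHSensitiveAut {X : Type*} [TopologicalSpace X] (g : X → X) : Prop :=
  ∃ 𝒰 : Finset (Set X), IsFinOpenCover 𝒰 ∧
    ∀ V : Set X, IsOpen V → V.Nonempty → Thick (HNSetAut g V 𝒰)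

/-- Multi-Hausdorff sensitivity of the autonomous system `(X, g)`. -/
def MultiHSensitiveAut {X : Type*} [TopologicalSpace X] (g : X → X) : Prop :=
  ∃ 𝒰 : Finset (Set X), IsFinOpenCover 𝒰 ∧
    ∀ (m : ℕ) (V : Fin (m + 1) → Set X),
      (∀ i, IsOpen (V i)) → (∀ i, (V i).Nonempty) → (⋂ i, HNSetAut g (V i) 𝒰).Nonempty


lemma traj_continuous {X : Type*} [TopologicalSpace X] (f : ℕ → X → X)
    (hf : ∀ n, Continuous (f n)) (n : ℕ) : Continuous (traj f n) := by
  induction n with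
  | zero => exact continuous_id
  | succ n ih => exact (hf (n + 1)).comp ih

lemma traj_shift {X : Type*} (f : ℕ → X → X) (m : ℕ) :
    ∀ s, traj f (m + s) = traj (fun k => f (m + k)) s ∘ traj f m := by
  intro s
  induction s with
  | zero => rfl
  | succ s ih =>
    show traj f ((m + s) + 1) = _
    rw [traj, ih]
    rfl

lemma traj_add {X : Type*} (f : ℕ → X → X) (p : ℕ) (hper : PeriodicFam f p) (n : ℕ) :
    traj f (n + p) = traj f n ∘ traj f p := by
  induction n with
  | zero => simp; rfl
  | succ n ih =>
    have h1 : n + 1 + p = (n + p) + 1 := by omega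
    have h2 : n + p + 1 = (n + 1) + p := by omega
    rw [h1, traj, ih, h2, hper (n + 1)]
    rfl

lemma traj_mul {X : Type*} (f : ℕ → X → X) (p : ℕ) (hper : PeriodicFam f p) (n : ℕ) :
    traj f (n * p) = (traj f p)^[n] := by
  induction n with
  | zero => simp; rfl
  | succ n ih =>
    rw [Nat.succ_mul, traj_add f p hper, ih, Function.iterate_succ]

lemma f_shift_mod {X : Type*} (f : ℕ → X → X) (p : ℕ) (hp : 0 < p)
    (hper : PeriodicFam f p) (m : ℕ) :
    (fun k => f (m + k)) = (fun k => f (m % p + k)) := by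
  have key : ∀ q a, f (a + q * p) = f a := by
    intro q
    induction q with
    | zero => intro a; simp
    | succ q ih =>
      intro a
      have : a + (q + 1) * p = (a + q * p) + p := by ring
      rw [this, hper, ih]
  funext k
  have h1 : m % p + m / p * p = m := Nat.mod_add_div' m p
  have : m + k = (m % p + k) + (m / p) * p := by omega
  rw [this, key]

theorem synEq_iff_synEq_induced {X : Type*} [UniformSpace X] [CompactSpace X]
    (f : ℕ → X → X) (hf : ∀ n, Continuous (f n))
    (p : ℕ) (hp : 0 < p) (hper : PeriodicFam f p) :
    (∀ x : X, SynEqPt f x) ↔ (∀ x : X, SynEqPtAut (traj f p) x) := by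
  constructor
  · intro h x F hF
    let hmap : ℕ → X → X := fun r => traj (fun k => f (r + k)) (p - r)
    have hmc : ∀ r, Continuous (hmap r) :=
      fun r => traj_continuous _ (fun n => hf _) _
    have hD : ∀ r, {z : X × X | (hmap r z.1, hmap r z.2) ∈ F} ∈ 𝓤 X := fun r =>
      (CompactSpace.uniformContinuous_of_continuous (hmc r)) hF
    have hEmem : (⋂ r ∈ Finset.range p, {z : X × X | (hmap r z.1, hmap r z.2) ∈ F}) ∈ 𝓤 X :=
      (Filter.biInter_finset_mem _).mpr (fun r _ => hD r)
    obtain ⟨U, hU, M, hM⟩ := h x _ hEmem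
    refine ⟨U, hU, M + 1, ?_⟩
    intro n
    obtain ⟨m, hmJ, hm1, hm2⟩ := hM (n * p)
    have hr : m % p < p := Nat.mod_lt _ hp
    refine ⟨m / p + 1, ?_, ?_, ?_⟩
    · intro x₁ hx₁ x₂ hx₂
      have key : (traj f p)^[m / p + 1] = hmap (m % p) ∘ traj f m := by
        have h1 : m % p + m / p * p = m := Nat.mod_add_div' m p
        have e1 : m + (p - m % p) = (m / p + 1) * p := by
          have h3 : (m / p + 1) * p = m / p * p + p := by ring
          omega
        have e2 : traj f (m + (p - m % p))
            = traj (fun k => f (m + k)) (p - m % p) ∘ traj f m := traj_shift f m _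
        rw [← traj_mul f p hper, ← e1, e2, f_shift_mod f p hp hper m]
      have hmem := hmJ x₁ hx₁ x₂ hx₂
      have hfin := Set.mem_iInter₂.mp hmem (m % p) (Finset.mem_range.mpr hr)
      show ((traj f p)^[m / p + 1] x₁, (traj f p)^[m / p + 1] x₂) ∈ F
      rw [congrFun key x₁, congrFun key x₂]
      exact hfin
    · have : n ≤ m / p := (Nat.le_div_iff_mul_le hp).mpr hm1
      omega
    · have h1 : M ≤ M * p := Nat.le_mul_of_pos_right M hp
      have h2 : m ≤ (n + M) * p := by
        have h3 : (n + M) * p = n * p + M * p := by ring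
        omega
      have h4 : m / p ≤ n + M := by
        calc m / p ≤ ((n + M) * p) / p := Nat.div_le_div_right h2
        _ = n + M := Nat.mul_div_cancel _ hp
      omega
  · intro h x F hF
    obtain ⟨U, hU, M, hM⟩ := h x F hF
    refine ⟨U, hU, (M + 1) * p, ?_⟩
    intro m
    obtain ⟨n, hnS, hn1, hn2⟩ := hM (m / p + 1)
    refine ⟨n * p, ?_, ?_, ?_⟩
    · intro x₁ hx₁ x₂ hx₂
      show (traj f (n * p) x₁, traj f (n * p) x₂) ∈ F
      rw [traj_mul f p hper]
      exact hnS x₁ hx₁ x₂ hx₂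
    · have h1 : m % p + m / p * p = m := Nat.mod_add_div' m p
      have h2 : (m / p + 1) * p ≤ n * p := Nat.mul_le_mul hn1 (le_refl p)
      have h3 : (m / p + 1) * p = m / p * p + p := by ring
      have h4 : m % p < p := Nat.mod_lt _ hp
      omega
    · have h1 : m % p + m / p * p = m := Nat.mod_add_div' m p
      have h2 : n * p ≤ (m / p + 1 + M) * p := Nat.mul_le_mul hn2 (le_refl p)
      have h3 : (m / p + 1 + M) * p = m / p * p + p + M * p := by ring
      have h4 : (M + 1) * p = M * p + p := by ring
      omega
end

section
/- Let (X, f_{1,∞}) be a non-autonomous system on a Hausdorff space X. Suppose (x,y) is not an equicontinuity pair and O is a splitting neighborhood of y with respect to x. Then for every neighborhood U of x and every neighborhood V of y, the set {n ∈ ℕ : f_1^n(U) ∩ V ≠ ∅ and f_1^n(U) ⊄ O} is infinite. -/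
open Topology Filter Set
open scoped Uniformity

/-
Splitting times of smaller neighbourhoods `U' ⊆ U`, `V' ⊆ V` are splitting times of `U`, `V`.
By continuity and Hausdorffness, `U'` and `V'` can be shrunk so that no time `n ≤ N` splits
them: either `f_1^n(x) ≠ y` and `f_1^n(U')` misses `V'`, or `f_1^n(x) = y` and
`f_1^n(U') ⊆ O`. So `U`, `V` have splitting times beyond every `N`.
-/

theorem continuous_traj {X : Type*} [TopologicalSpace X] {f : ℕ → X → X}
    (hf : ∀ n, Continuous (f n)) : ∀ n, Continuous (traj f n)
  | 0 => continuous_id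
  | n + 1 => (hf (n + 1)).comp (continuous_traj hf n)

theorem Filter.exists_mem_mem_of_eventually_smallSets_prod {α β : Type*} {l₁ : Filter α}
    {l₂ : Filter β} {p : Set α × Set β → Prop}
    (h : ∀ᶠ st in l₁.smallSets ×ˢ l₂.smallSets, p st) : ∃ s ∈ l₁, ∃ t ∈ l₂, p (s, t) := by
  obtain ⟨p₁, hp₁, p₂, hp₂, hp⟩ := eventually_prod_iff.1 h
  obtain ⟨s, hs, hsp⟩ := eventually_smallSets.1 hp₁
  obtain ⟨t, ht, htp⟩ := eventually_smallSets.1 hp₂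
  exact ⟨s, hs, t, ht, hp (hsp s subset_rfl) (htp t subset_rfl)⟩

theorem eventually_smallSets_image_inter_nonempty_imp_subset {X Y : Type*} [TopologicalSpace X]
    [TopologicalSpace Y] [T2Space Y] {g : X → Y} {x : X} {y : Y} {O : Set Y}
    (hg : ContinuousAt g x) (hO : O ∈ 𝓝 y) :
    ∀ᶠ UV in (𝓝 x).smallSets ×ˢ (𝓝 y).smallSets,
      (g '' UV.1 ∩ UV.2).Nonempty → g '' UV.1 ⊆ O := by
  rcases eq_or_ne (g x) y with rfl | hne
  · filter_upwards [(eventually_smallSets_subset.2 (hg.preimage_mem_nhds hO)).prod_inl _]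
      with UV hU _ using image_subset_iff.2 hU
  · obtain ⟨u, v, hu, hv, huv⟩ := t2_separation_nhds hne
    filter_upwards [(eventually_smallSets_subset.2 (hg.preimage_mem_nhds hu)).prod_inl _,
      (eventually_smallSets_subset.2 hv).prod_inr _] with UV hU hV hmeet
    obtain ⟨_, ⟨z, hz, rfl⟩, hzV⟩ := hmeet
    exact (huv.ne_of_mem (hU hz) (hV hzV) rfl).elim

theorem SplittingNbhd.frequently_atTop {X : Type*} [TopologicalSpace X] [T2Space X]
    {f : ℕ → X → X} (hf : ∀ n, Continuous (f n)) {x y : X} {O : Set X}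
    (hO : SplittingNbhd f x y O) {U V : Set X} (hU : U ∈ 𝓝 x) (hV : V ∈ 𝓝 y) :
    ∃ᶠ n in atTop, 0 < n ∧ ((traj f n '' U) ∩ V).Nonempty ∧ ¬ traj f n '' U ⊆ O := by
  refine frequently_atTop'.2 fun N => ?_
  have hsmall : ∀ᶠ UV in (𝓝 x).smallSets ×ˢ (𝓝 y).smallSets, UV.1 ⊆ U ∧ UV.2 ⊆ V ∧
      ∀ n ∈ Iic N, (traj f n '' UV.1 ∩ UV.2).Nonempty → traj f n '' UV.1 ⊆ O :=
    ((eventually_smallSets_subset.2 hU).prod_inl _).and <|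
      ((eventually_smallSets_subset.2 hV).prod_inr _).and <|
      (eventually_all_finite (finite_Iic N)).2 fun n _ =>
        eventually_smallSets_image_inter_nonempty_imp_subset
          (continuous_traj hf n).continuousAt hO.1
  obtain ⟨U', hU', V', hV', hU'U, hV'V, hcontrol⟩ :=
    Filter.exists_mem_mem_of_eventually_smallSets_prod hsmall
  obtain ⟨n, hn, hmeet, hsplit⟩ := hO.2 U' hU' V' hV'
  exact ⟨n, not_le.1 fun hle => hsplit (hcontrol n hle hmeet), hn,
    hmeet.mono (inter_subset_inter (image_mono hU'U) hV'V),
    fun hsub => hsplit ((image_mono hU'U).trans hsub)⟩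

theorem splitting_set_infinite_general {X : Type*} [TopologicalSpace X] [T2Space X]
    (f : ℕ → X → X) (hf : ∀ n, Continuous (f n))
    (x y : X) (O : Set X) (hO : SplittingNbhd f x y O) :
    ∀ U ∈ 𝓝 x, ∀ V ∈ 𝓝 y,
      {n : ℕ | 0 < n ∧ ((traj f n '' U) ∩ V).Nonempty ∧ ¬ traj f n '' U ⊆ O}.Infinite :=
  fun _ hU _ hV => Nat.frequently_atTop_iff_infinite.1 (hO.frequently_atTop hf hU hV)

theorem splitting_set_infinite {X : Type*} [TopologicalSpace X] [T2Space X]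
    (f : ℕ → X → X) (hf : ∀ n, Continuous (f n))
    (x y : X) (hne : ¬ EqPair f x y) (O : Set X) (hO : SplittingNbhd f x y O) :
    ∀ U ∈ 𝓝 x, ∀ V ∈ 𝓝 y,
      {n : ℕ | 0 < n ∧ ((traj f n '' U) ∩ V).Nonempty ∧ ¬ traj f n '' U ⊆ O}.Infinite :=
  splitting_set_infinite_general f hf x y O hO
end
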